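/- arXiv:1509.07884 — 2 statements merged into one kernel-verified Lean document; each statement's English description precedes it below -/
import Mathlib

section
/- Fix v ∈ ℝ^{n+1} with v_1 < v_2 < ⋯ < v_{n+1}. Then v is a vertex of Perm(v), the feasible cone of Perm(v) at v is the cone generated by the vectors e_1 − e_2, e_2 − e_3, …, e_n − e_{n+1}, and for each S ⊆ [n] the set F_S := Perm(v) ∩ (v + span{e_i − e_{i+1} : i ∈ S}) is a face of Perm(v) of dimension |S|; moreover S ↦ F_S is a bijection from the subsets of [n] onto the faces of Perm(v) that contain the vertex v. -/
open scoped Pointwise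
open Filter MeasureTheory

/-- Number of lattice points (points of `ℤ^D`) in a subset of `ℝ^D`. -/
noncomputable def latticePts {D : ℕ} (A : Set (Fin D → ℝ)) : ℕ :=
  {z : Fin D → ℤ | (fun i => (z i : ℝ)) ∈ A}.ncard

/-- A polytope: convex hull of a nonempty finite set of points. -/
def IsPolytope {D : ℕ} (P : Set (Fin D → ℝ)) : Prop :=
  ∃ V : Finset (Fin D → ℝ), V.Nonempty ∧ P = convexHull ℝ (V : Set (Fin D → ℝ))

/-- An integral polytope: convex hull of a nonempty finite set of lattice points. -/
def IsIntegralPolytope {D : ℕ} (P : Set (Fin D → ℝ)) : Prop :=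
  ∃ V : Finset (Fin D → ℝ), V.Nonempty ∧ (∀ x ∈ V, ∀ i, ∃ z : ℤ, x i = (z : ℝ)) ∧
    P = convexHull ℝ (V : Set (Fin D → ℝ))

/-- `F` is a (nonempty, exposed) face of `P`: the set of maximizers over `P`
of some linear functional. -/
def IsFaceOf {D : ℕ} (F P : Set (Fin D → ℝ)) : Prop :=
  F.Nonempty ∧ ∃ c : Fin D → ℝ, F = {x ∈ P | ∀ y ∈ P, ∑ i, c i * y i ≤ ∑ i, c i * x i}

/-- Dimension of a polytope: the rank of the direction space of its affine span. -/
noncomputable def polyDim {D : ℕ} (P : Set (Fin D → ℝ)) : ℕ :=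
  Module.finrank ℝ (vectorSpan ℝ P)

/-- The usual permutohedron `Perm(v)`: convex hull of all coordinate permutations of `v`. -/
def permutohedron {n : ℕ} (v : Fin (n+1) → ℝ) : Set (Fin (n+1) → ℝ) :=
  convexHull ℝ {x | ∃ σ : Equiv.Perm (Fin (n+1)), x = v ∘ ⇑σ}

/-- The vector `e_i - e_{i+1}` (1-indexed: index `i : Fin n` corresponds to `i+1 ∈ [n]`). -/
def eDiff {n : ℕ} (i : Fin n) : Fin (n+1) → ℝ :=
  fun k => (if k = i.castSucc then 1 else 0) - (if k = i.succ then 1 else 0)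

/-- The face `F_S = Perm(v) ∩ (v + span{e_i - e_{i+1} : i ∈ S})`. -/
def faceS {n : ℕ} (v : Fin (n+1) → ℝ) (S : Finset (Fin n)) : Set (Fin (n+1) → ℝ) :=
  permutohedron v ∩ {x | x - v ∈ Submodule.span ℝ (eDiff '' (S : Set (Fin n)))}

/-- Feasible cone of a face `F` of `P`:
`{u : x + δu ∈ P for every x ∈ F and all sufficiently small δ > 0}`. -/
def fcone {D : ℕ} (F P : Set (Fin D → ℝ)) : Set (Fin D → ℝ) :=
  {u | ∀ x ∈ F, ∃ ε > (0:ℝ), ∀ δ : ℝ, 0 < δ → δ < ε → x + δ • u ∈ P}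

/-! Write points of `ℝ^{n+1}` through their prefix sums `p_j(x) = x_1 + ⋯ + x_j`. On `Perm(v)` the
total sum is constant and, by the rearrangement inequality, `p_j(x) ≥ p_j(v)`; since the `e_j - e_{j+1}`
are dual to the prefix sums, `x - v = ∑_j (p_j(x) - p_j(v)) (e_j - e_{j+1})` with nonnegative
coefficients. This gives the feasible cone, and pairing with a functional `c` gives
`⟨c, x⟩ = ⟨c, v⟩ - ∑_j (p_j(x) - p_j(v)) (c_{j+1} - c_j)`. A functional maximised at `v` has
`c_j ≤ c_{j+1}` (test it on the adjacent transpositions of `v`), so its face is cut out by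
`p_j(x) = p_j(v)` for the `j` with `c_j < c_{j+1}`: it is `F_S` for `S = {j | c_j = c_{j+1}}`.
Conversely `c = -∑_{j ∉ S} 1_{[1, j]}` exposes `F_S`. -/
open Matrix

section PrefixSums

variable {ι : Type*} [LinearOrder ι]

-- `prefixVec j ⬝ᵥ x` is the prefix sum `∑ k ≤ j, x k`; `prefixVec j.castSucc` is dual to `eDiff j`.
def prefixVec (j : ι) : ι → ℝ := fun k => if k ≤ j then 1 else 0

theorem antitone_prefixVec (j : ι) : Antitone (prefixVec j) := by
  intro k k' hkk'
  unfold prefixVec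
  split_ifs with hk' hk <;> norm_num
  exact hk (hkk'.trans hk')

variable [Fintype ι]

theorem eq_zero_of_forall_prefixVec_dotProduct_eq_zero {x : ι → ℝ}
    (h : ∀ j, prefixVec j ⬝ᵥ x = 0) : x = 0 := by
  funext j
  induction j using WellFoundedLT.induction with
  | _ j ih =>
    rw [Pi.zero_apply, ← h j, dotProduct, Finset.sum_eq_single j]
    · simp [prefixVec]
    · intro k _ hkj
      unfold prefixVec
      split_ifs with hk
      · rw [ih k (lt_of_le_of_ne hk hkj), Pi.zero_apply, mul_zero]
      · rw [zero_mul]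
    · simp

end PrefixSums

section EDiff

variable {n : ℕ}

theorem prefixVec_last : prefixVec (Fin.last n) = 1 := by
  funext k
  simp [prefixVec, Fin.le_last]

theorem dotProduct_eDiff (c : Fin (n+1) → ℝ) (i : Fin n) :
    c ⬝ᵥ eDiff i = c i.castSucc - c i.succ := by
  simp [dotProduct, eDiff, mul_sub, Finset.sum_sub_distrib]

theorem one_dotProduct_eDiff (i : Fin n) : 1 ⬝ᵥ eDiff i = 0 := by
  simp [dotProduct_eDiff]

theorem prefixVec_castSucc_dotProduct_eDiff (j i : Fin n) :
    prefixVec j.castSucc ⬝ᵥ eDiff i = if i = j then 1 else 0 := by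
  rw [dotProduct_eDiff]
  simp only [prefixVec, Fin.le_def, Fin.val_castSucc, Fin.val_succ, Fin.ext_iff]
  split_ifs <;> (try norm_num) <;> omega

theorem eq_sum_smul_eDiff_of_one_dotProduct_eq_zero {u : Fin (n+1) → ℝ} (hu : 1 ⬝ᵥ u = 0) :
    u = ∑ j, (prefixVec j.castSucc ⬝ᵥ u) • eDiff j := by
  rw [← sub_eq_zero]
  refine eq_zero_of_forall_prefixVec_dotProduct_eq_zero fun j => ?_
  induction j using Fin.lastCases with
  | last => simp [dotProduct_sub, dotProduct_sum, prefixVec_last, one_dotProduct_eDiff, hu]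
  | cast j =>
    simp [dotProduct_sub, dotProduct_sum, prefixVec_castSucc_dotProduct_eDiff]

theorem prefixVec_castSucc_dotProduct_eq_zero_of_mem_span {S : Finset (Fin n)}
    {u : Fin (n+1) → ℝ} (hu : u ∈ Submodule.span ℝ (eDiff '' (S : Set (Fin n))))
    {j : Fin n} (hj : j ∉ S) : prefixVec j.castSucc ⬝ᵥ u = 0 := by
  induction hu using Submodule.span_induction with
  | mem x hx =>
    obtain ⟨i, hi, rfl⟩ := hx
    rw [prefixVec_castSucc_dotProduct_eDiff, if_neg (ne_of_mem_of_not_mem hi hj)]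
  | zero => exact dotProduct_zero _
  | add x y _ _ hx hy => rw [dotProduct_add, hx, hy, add_zero]
  | smul a x _ hx => rw [dotProduct_smul, hx, smul_zero]

theorem linearIndependent_eDiff : LinearIndependent ℝ (eDiff : Fin n → Fin (n+1) → ℝ) := by
  refine Fintype.linearIndependent_iff.mpr fun g hg j => ?_
  simpa [dotProduct_sum, prefixVec_castSucc_dotProduct_eDiff] using
    congrArg (prefixVec j.castSucc ⬝ᵥ ·) hg

theorem finrank_span_eDiff (S : Finset (Fin n)) :
    Module.finrank ℝ (Submodule.span ℝ (eDiff '' (S : Set (Fin n)))) = S.card := by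
  rw [Set.image_eq_range]
  exact (finrank_span_eq_card (linearIndependent_eDiff.comp _ Subtype.val_injective)).trans (by simp)

end EDiff

theorem Convex.add_sum_smul_mem {E ι : Type*} [AddCommGroup E] [Module ℝ E] [Fintype ι]
    {s : Set E} (hs : Convex ℝ s) {x : E} (hx : x ∈ s) {w : ι → E} (hw : ∀ i, x + w i ∈ s)
    {t : ι → ℝ} (ht : ∀ i, 0 ≤ t i) (hsum : ∑ i, t i ≤ 1) :
    x + ∑ i, t i • w i ∈ s := by
  have hmem := hs.sum_mem (t := Finset.univ) (w := fun o : Option ι => o.elim (1 - ∑ i, t i) t)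
    (z := fun o => o.elim x (x + w ·))
    (by rintro (_ | i) _ <;> simp [ht, hsum]) (by simp [Fintype.sum_option])
    (by rintro (_ | i) _ <;> simp [hx, hw])
  convert hmem using 1
  simp only [Fintype.sum_option, Option.elim, smul_add, Finset.sum_add_distrib, ← Finset.sum_smul]
  rw [sub_smul, one_smul]
  abel

section Permutohedron

variable {n : ℕ} {v x : Fin (n+1) → ℝ}

theorem convex_permutohedron (v : Fin (n+1) → ℝ) : Convex ℝ (permutohedron v) :=
  convex_convexHull ℝ _

theorem comp_perm_mem_permutohedron (σ : Equiv.Perm (Fin (n+1))) :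
    v ∘ σ ∈ permutohedron v :=
  subset_convexHull ℝ _ ⟨σ, rfl⟩

theorem self_mem_permutohedron : v ∈ permutohedron v :=
  comp_perm_mem_permutohedron 1

theorem comp_swap_eq_add_smul_eDiff (v : Fin (n+1) → ℝ) (i : Fin n) :
    v ∘ Equiv.swap i.castSucc i.succ = v + (v i.succ - v i.castSucc) • eDiff i := by
  have hne : i.castSucc ≠ i.succ := Fin.castSucc_lt_succ.ne
  funext k
  simp only [Pi.add_apply, Pi.smul_apply, eDiff, smul_eq_mul, Function.comp_apply]
  rcases eq_or_ne k i.castSucc with rfl | h1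
  · simp [hne]
  rcases eq_or_ne k i.succ with rfl | h2
  · simp [hne.symm]
  simp [Equiv.swap_apply_of_ne_of_ne h1 h2, h1, h2]

theorem add_smul_eDiff_mem_permutohedron (v : Fin (n+1) → ℝ) (i : Fin n) :
    v + (v i.succ - v i.castSucc) • eDiff i ∈ permutohedron v :=
  comp_swap_eq_add_smul_eDiff v i ▸ comp_perm_mem_permutohedron _

theorem dotProduct_mem_of_mem_permutohedron {c : Fin (n+1) → ℝ} {s : Set ℝ}
    (hs : Convex ℝ s) (h : ∀ σ : Equiv.Perm (Fin (n+1)), c ⬝ᵥ (v ∘ σ) ∈ s)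
    (hx : x ∈ permutohedron v) : c ⬝ᵥ x ∈ s :=
  convexHull_min (by rintro _ ⟨σ, rfl⟩; exact h σ) (hs.linear_preimage (dotProductBilin ℝ ℝ c)) hx

theorem one_dotProduct_eq_of_mem_permutohedron (hx : x ∈ permutohedron v) :
    1 ⬝ᵥ x = 1 ⬝ᵥ v :=
  dotProduct_mem_of_mem_permutohedron (s := {1 ⬝ᵥ v}) (convex_singleton _)
    (fun σ => by simp [one_dotProduct, Equiv.sum_comp σ v]) hx

theorem prefixVec_dotProduct_le_of_mem_permutohedron (hv : Monotone v) (j : Fin (n+1))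
    (hx : x ∈ permutohedron v) : prefixVec j ⬝ᵥ v ≤ prefixVec j ⬝ᵥ x :=
  dotProduct_mem_of_mem_permutohedron (convex_Ici _)
    (fun _ => ((antitone_prefixVec j).antivary hv).sum_smul_le_sum_smul_comp_perm) hx

theorem sub_eq_sum_smul_eDiff_of_mem_permutohedron (hx : x ∈ permutohedron v) :
    x - v = ∑ j, (prefixVec j.castSucc ⬝ᵥ x - prefixVec j.castSucc ⬝ᵥ v) • eDiff j := by
  simpa only [dotProduct_sub] using eq_sum_smul_eDiff_of_one_dotProduct_eq_zero (u := x - v)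
    (by rw [dotProduct_sub, one_dotProduct_eq_of_mem_permutohedron hx, sub_self])

end Permutohedron

section Faces

variable {n : ℕ} {v x : Fin (n+1) → ℝ} {c : Fin (n+1) → ℝ}

theorem self_mem_faceS (S : Finset (Fin n)) : v ∈ faceS v S :=
  ⟨self_mem_permutohedron, by simp⟩

theorem faceS_empty : faceS v ∅ = {v} := by
  ext x
  simp only [faceS, Finset.coe_empty, Set.image_empty, Submodule.span_empty, Set.mem_inter_iff,
    Set.mem_ofPred_eq, Submodule.mem_bot, sub_eq_zero, Set.mem_singleton_iff]
  exact ⟨And.right, fun hx => ⟨hx ▸ self_mem_permutohedron, hx⟩⟩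

theorem sub_mem_span_eDiff_iff (S : Finset (Fin n)) (hx : x ∈ permutohedron v) :
    x - v ∈ Submodule.span ℝ (eDiff '' (S : Set (Fin n))) ↔
      ∀ j ∉ S, prefixVec j.castSucc ⬝ᵥ x = prefixVec j.castSucc ⬝ᵥ v := by
  refine ⟨fun h j hj => ?_, fun h => ?_⟩
  · rw [← sub_eq_zero, ← dotProduct_sub]
    exact prefixVec_castSucc_dotProduct_eq_zero_of_mem_span h hj
  · rw [sub_eq_sum_smul_eDiff_of_mem_permutohedron hx]
    refine Submodule.sum_mem _ fun j _ => ?_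
    by_cases hj : j ∈ S
    · exact Submodule.smul_mem _ _ (Submodule.subset_span ⟨j, hj, rfl⟩)
    · rw [h j hj, sub_self, zero_smul]
      exact Submodule.zero_mem _

theorem dotProduct_eq_add_sum_of_mem_permutohedron (c : Fin (n+1) → ℝ)
    (hx : x ∈ permutohedron v) :
    c ⬝ᵥ x = c ⬝ᵥ v + ∑ j : Fin n, (prefixVec j.castSucc ⬝ᵥ x - prefixVec j.castSucc ⬝ᵥ v) *
      (c j.castSucc - c j.succ) := by
  rw [← sub_eq_iff_eq_add', ← dotProduct_sub, sub_eq_sum_smul_eDiff_of_mem_permutohedron hx]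
  simp [dotProduct_sum, dotProduct_eDiff]

theorem prefix_gap_mul_nonpos (hv : Monotone v) (hc : ∀ j : Fin n, c j.castSucc ≤ c j.succ)
    (hx : x ∈ permutohedron v) (j : Fin n) :
    (prefixVec j.castSucc ⬝ᵥ x - prefixVec j.castSucc ⬝ᵥ v) * (c j.castSucc - c j.succ) ≤ 0 :=
  mul_nonpos_of_nonneg_of_nonpos
    (sub_nonneg.2 (prefixVec_dotProduct_le_of_mem_permutohedron hv _ hx)) (sub_nonpos.2 (hc j))

theorem dotProduct_le_of_mem_permutohedron (hv : Monotone v)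
    (hc : ∀ j : Fin n, c j.castSucc ≤ c j.succ) (hx : x ∈ permutohedron v) :
    c ⬝ᵥ x ≤ c ⬝ᵥ v := by
  rw [dotProduct_eq_add_sum_of_mem_permutohedron c hx]
  linarith [Finset.sum_nonpos (s := Finset.univ) fun j _ => prefix_gap_mul_nonpos hv hc hx j]

theorem dotProduct_eq_iff_mem_faceS (hv : Monotone v) (hc : ∀ j : Fin n, c j.castSucc ≤ c j.succ)
    (hx : x ∈ permutohedron v) :
    c ⬝ᵥ x = c ⬝ᵥ v ↔ x ∈ faceS v {j | c j.castSucc = c j.succ} := by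
  rw [dotProduct_eq_add_sum_of_mem_permutohedron c hx, add_eq_left,
    Finset.sum_eq_zero_iff_of_nonpos fun j _ => prefix_gap_mul_nonpos hv hc hx j, faceS,
    Set.mem_inter_iff, Set.mem_ofPred_eq, sub_mem_span_eDiff_iff _ hx]
  simp only [Finset.mem_univ, true_implies, mul_eq_zero, sub_eq_zero, Finset.mem_filter, hx,
    true_and, or_iff_not_imp_right]

theorem maximizers_eq_faceS (hv : Monotone v) (hc : ∀ j : Fin n, c j.castSucc ≤ c j.succ) :
    {x ∈ permutohedron v | ∀ y ∈ permutohedron v, c ⬝ᵥ y ≤ c ⬝ᵥ x} =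
      faceS v {j | c j.castSucc = c j.succ} := by
  ext x
  refine ⟨fun ⟨hx, hmax⟩ => ?_, fun hxF => ⟨hxF.1, fun y hy => ?_⟩⟩
  · exact (dotProduct_eq_iff_mem_faceS hv hc hx).1 <|
      le_antisymm (dotProduct_le_of_mem_permutohedron hv hc hx) (hmax v self_mem_permutohedron)
  · rw [(dotProduct_eq_iff_mem_faceS hv hc hxF.1).2 hxF]
    exact dotProduct_le_of_mem_permutohedron hv hc hy

theorem exists_adjacent_le_and_eq_iff_mem (S : Finset (Fin n)) :
    ∃ c : Fin (n+1) → ℝ,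
      (∀ j : Fin n, c j.castSucc ≤ c j.succ) ∧ ∀ j : Fin n, c j.castSucc = c j.succ ↔ j ∈ S := by
  obtain ⟨c, hstep⟩ : ∃ c : Fin (n+1) → ℝ,
      ∀ j : Fin n, c j.castSucc - c j.succ = if j ∈ S then 0 else -1 := by
    refine ⟨-∑ i ∈ Sᶜ, prefixVec i.castSucc, fun j => ?_⟩
    rw [← dotProduct_eDiff]
    simp [sum_dotProduct, prefixVec_castSucc_dotProduct_eDiff, apply_ite]
  refine ⟨c, fun j => ?_, fun j => ?_⟩
  · have := hstep j
    split_ifs at this <;> linarith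
  · rw [← sub_eq_zero, hstep j]
    split_ifs <;> simpa

theorem isFaceOf_faceS (hv : Monotone v) (S : Finset (Fin n)) :
    IsFaceOf (faceS v S) (permutohedron v) := by
  obtain ⟨c, hc, hS⟩ := exists_adjacent_le_and_eq_iff_mem S
  have hS' : ({j | c j.castSucc = c j.succ} : Finset (Fin n)) = S := by
    ext j
    simp [hS]
  exact ⟨⟨v, self_mem_faceS S⟩, c, (hS' ▸ maximizers_eq_faceS hv hc).symm⟩

end Faces

section StrictlyIncreasing

variable {n : ℕ} {v : Fin (n+1) → ℝ}

theorem adjacent_le_of_forall_dotProduct_le (hv : StrictMono v) {c : Fin (n+1) → ℝ}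
    (hmax : ∀ y ∈ permutohedron v, c ⬝ᵥ y ≤ c ⬝ᵥ v) (j : Fin n) : c j.castSucc ≤ c j.succ := by
  have h := hmax _ (add_smul_eDiff_mem_permutohedron v j)
  rw [dotProduct_add, dotProduct_smul, dotProduct_eDiff, smul_eq_mul] at h
  have hgap : 0 < v j.succ - v j.castSucc := sub_pos.2 (hv Fin.castSucc_lt_succ)
  nlinarith

theorem exists_faceS_eq_of_isFaceOf (hv : StrictMono v) {F : Set (Fin (n+1) → ℝ)}
    (hF : IsFaceOf F (permutohedron v)) (hvF : v ∈ F) : ∃ S, faceS v S = F := by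
  obtain ⟨-, c, rfl⟩ := hF
  have hc := adjacent_le_of_forall_dotProduct_le hv hvF.2
  exact ⟨_, (maximizers_eq_faceS hv.monotone hc).symm⟩

theorem add_smul_eDiff_mem_faceS_iff (hv : StrictMono v) (S : Finset (Fin n)) (i : Fin n) :
    v + (v i.succ - v i.castSucc) • eDiff i ∈ faceS v S ↔ i ∈ S := by
  simp only [faceS, Set.mem_inter_iff, add_smul_eDiff_mem_permutohedron, true_and,
    Set.mem_ofPred_eq, add_sub_cancel_left]
  refine ⟨fun h => ?_, fun hi => Submodule.smul_mem _ _ (Submodule.subset_span ⟨i, hi, rfl⟩)⟩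
  by_contra hi
  have h0 := prefixVec_castSucc_dotProduct_eq_zero_of_mem_span h hi
  rw [dotProduct_smul, prefixVec_castSucc_dotProduct_eDiff, if_pos rfl, smul_eq_mul, mul_one,
    sub_eq_zero] at h0
  exact (hv Fin.castSucc_lt_succ).ne' h0

theorem faceS_injective (hv : StrictMono v) : Function.Injective (faceS v) := fun S T h => by
  ext i
  rw [← add_smul_eDiff_mem_faceS_iff hv, h, add_smul_eDiff_mem_faceS_iff hv]

theorem vectorSpan_faceS (hv : StrictMono v) (S : Finset (Fin n)) :
    vectorSpan ℝ (faceS v S) = Submodule.span ℝ (eDiff '' (S : Set (Fin n))) := by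
  rw [vectorSpan_eq_span_vsub_set_right ℝ (self_mem_faceS S)]
  refine le_antisymm (Submodule.span_le.2 ?_) (Submodule.span_le.2 ?_)
  · rintro _ ⟨x, hx, rfl⟩
    exact hx.2
  · rintro _ ⟨i, hi, rfl⟩
    have hgap : v i.succ - v i.castSucc ≠ 0 := (sub_pos.2 (hv Fin.castSucc_lt_succ)).ne'
    have hmem : (v i.succ - v i.castSucc) • eDiff i ∈ Submodule.span ℝ ((· -ᵥ v) '' faceS v S) :=
      Submodule.subset_span ⟨_, (add_smul_eDiff_mem_faceS_iff hv S i).2 hi, by simp [vsub_eq_sub]⟩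
    simpa [smul_smul, hgap] using Submodule.smul_mem _ (v i.succ - v i.castSucc)⁻¹ hmem

theorem polyDim_faceS (hv : StrictMono v) (S : Finset (Fin n)) :
    polyDim (faceS v S) = S.card := by
  rw [polyDim, vectorSpan_faceS hv, finrank_span_eDiff]

theorem sum_smul_eDiff_mem_fcone (hv : StrictMono v) {c : Fin n → ℝ} (hc : ∀ i, 0 ≤ c i) :
    ∑ i, c i • eDiff i ∈ fcone {v} (permutohedron v) := by
  intro x hx
  rw [Set.mem_singleton_iff.1 hx]
  set gap : Fin n → ℝ := fun i => v i.succ - v i.castSucc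
  have hgap (i : Fin n) : 0 < gap i := sub_pos.2 (hv Fin.castSucc_lt_succ)
  set A := ∑ i, c i / gap i
  have hA : 0 ≤ A := Finset.sum_nonneg fun i _ => div_nonneg (hc i) (hgap i).le
  refine ⟨1 / (A + 1), by positivity, fun δ hδ hδA => ?_⟩
  rw [lt_div_iff₀ (by positivity)] at hδA
  have hsum : ∑ i, δ * c i / gap i = δ * A := by
    simp only [A, Finset.mul_sum, mul_div_assoc]
  have hmem := (convex_permutohedron v).add_sum_smul_mem self_mem_permutohedron
    (add_smul_eDiff_mem_permutohedron v) (t := fun i => δ * c i / gap i)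
    (fun i => div_nonneg (mul_nonneg hδ.le (hc i)) (hgap i).le) (by rw [hsum]; nlinarith)
  convert hmem using 2
  rw [Finset.smul_sum]
  refine Finset.sum_congr rfl fun i _ => ?_
  rw [smul_smul, smul_smul, div_mul_cancel₀ _ (hgap i).ne']

theorem exists_nonneg_eq_sum_smul_eDiff_of_mem_fcone (hv : Monotone v) {u : Fin (n+1) → ℝ}
    (hu : u ∈ fcone {v} (permutohedron v)) :
    ∃ c : Fin n → ℝ, (∀ i, 0 ≤ c i) ∧ u = ∑ i, c i • eDiff i := by
  obtain ⟨ε, hε, hδ⟩ := hu v rfl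
  have hx := hδ (ε / 2) (by positivity) (by linarith)
  set x := v + (ε / 2) • u with hx_def
  refine ⟨fun j => (ε / 2)⁻¹ * (prefixVec j.castSucc ⬝ᵥ x - prefixVec j.castSucc ⬝ᵥ v),
    fun j => mul_nonneg (by positivity)
      (sub_nonneg.2 (prefixVec_dotProduct_le_of_mem_permutohedron hv _ hx)), ?_⟩
  calc u = (ε / 2)⁻¹ • (x - v) := by
        rw [hx_def, add_sub_cancel_left, smul_smul, inv_mul_cancel₀ (by positivity), one_smul]
    _ = _ := by
        rw [sub_eq_sum_smul_eDiff_of_mem_permutohedron hx, Finset.smul_sum]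
        simp only [smul_smul]

end StrictlyIncreasing

/-- For strictly increasing `v`: (a) `v` is a vertex of `Perm(v)`; (b) the feasible cone
of `Perm(v)` at `v` is the cone generated by `e_1-e_2, …, e_n-e_{n+1}`; (c) each `F_S` is
a face of `Perm(v)` of dimension `|S|`; (d) `S ↦ F_S` is a bijection from subsets of `[n]`
onto the faces of `Perm(v)` containing `v`. -/
theorem faces_at_vertex_of_permutohedron {n : ℕ} (v : Fin (n+1) → ℝ) (hv : StrictMono v) :
    IsFaceOf {v} (permutohedron v) ∧
    fcone {v} (permutohedron v) =
      {u | ∃ c : Fin n → ℝ, (∀ i, 0 ≤ c i) ∧ u = ∑ i, c i • eDiff i} ∧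
    (∀ S : Finset (Fin n),
      IsFaceOf (faceS v S) (permutohedron v) ∧ polyDim (faceS v S) = S.card) ∧
    Set.BijOn (faceS v) Set.univ {F | IsFaceOf F (permutohedron v) ∧ v ∈ F} := by
  have hface := isFaceOf_faceS hv.monotone
  refine ⟨faceS_empty (v := v) ▸ hface ∅, ?_, fun S => ⟨hface S, polyDim_faceS hv S⟩,
    fun S _ => ⟨hface S, self_mem_faceS S⟩, (faceS_injective hv).injOn, ?_⟩
  · ext u
    refine ⟨exists_nonneg_eq_sum_smul_eDiff_of_mem_fcone hv.monotone, ?_⟩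
    rintro ⟨c, hc, rfl⟩
    exact sum_smul_eDiff_mem_fcone hv hc
  · rintro F ⟨hF, hvF⟩
    obtain ⟨S, rfl⟩ := exists_faceS_eq_of_isFaceOf hv hF hvF
    exact ⟨S, trivial, rfl⟩
end

section
/- Let α assign a real number α(F,P) to every pair consisting of an integral polytope P ⊆ ℝ^D and a nonempty face F of P. Assume α satisfies McMullen's formula and that α(tF, tP) = α(F,P) for every positive integer t and every nonempty face F of every integral polytope P. Then for every nonempty integral polytope P ⊆ ℝ^D and every integer t ≥ 1, Lat(tP) = Σ_{k=0}^{dim P} c_k t^k, where c_k = Σ_{F a k-dimensional face of P} α(F,P)·nvol(F); that is, t ↦ Lat(tP) agrees for t ≥ 1 with a polynomial whose coefficient of t^k is given by this face sum. -/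
open scoped Pointwise
open Filter MeasureTheory

/-- Normalized volume of an integral polytope `F`: volume with respect to the
translation-invariant measure on its affine span for which a fundamental domain of the
lattice (direction of affine span) ∩ ℤ^D has measure 1.  For an integral polytope this
equals the limit of `Lat(tF)/t^(dim F)`. -/
noncomputable def nvol {D : ℕ} (F : Set (Fin D → ℝ)) : ℝ :=
  limUnder atTop (fun t : ℕ => (latticePts ((t : ℝ) • F) : ℝ) / (t : ℝ) ^ polyDim F)

/-! McMullen's formula for `tP` runs over the faces of `tP`, which are the dilates `tF` of the
faces of `P`. Since `α` is dilation invariant and `nvol (tF) = t ^ dim F * nvol F`, grouping the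
faces by dimension gives the polynomial. The homogeneity of `nvol` needs the limit defining it to
exist: in lattice coordinates on the rational subspace parallel to `F`, it is the convergence
`Lat(sK) / s^d → vol K` for a compact convex body `K`, because the union of the grid cells of
mesh `1/s` with corner in `K` converges to `K` off its null boundary. -/

open Submodule Set

section IntegerLattice

variable {D : ℕ}

abbrev intLattice (D : ℕ) : Submodule ℤ (Fin D → ℝ) :=
  span ℤ (range (Pi.basisFun ℝ (Fin D)))

lemma mem_intLattice {x : Fin D → ℝ} : x ∈ intLattice D ↔ ∀ i, ∃ z : ℤ, x i = z := by
  simp [(Pi.basisFun ℝ (Fin D)).mem_span_iff_repr_mem ℤ, eq_comm]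

lemma range_intCast_eq_intLattice :
    range (fun (z : Fin D → ℤ) i => (z i : ℝ)) = intLattice D := by
  ext x
  simp only [mem_range, SetLike.mem_coe, mem_intLattice, funext_iff]
  exact ⟨fun ⟨z, hz⟩ i => ⟨z i, (hz i).symm⟩, fun h => ⟨fun i => (h i).choose,
    fun i => (h i).choose_spec.symm⟩⟩

lemma latticePts_eq_ncard_inter (A : Set (Fin D → ℝ)) :
    latticePts A = (A ∩ intLattice D).ncard := by
  have hinj : Function.Injective fun (z : Fin D → ℤ) i => (z i : ℝ) := fun _ _ h =>
    funext fun i => Int.cast_injective (congrFun h i)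
  rw [latticePts, ← ncard_preimage_of_injective_subset_range hinj
    (range_intCast_eq_intLattice ▸ inter_subset_right), preimage_inter,
    ← range_intCast_eq_intLattice, preimage_range, inter_univ]
  rfl

lemma latticePts_vadd {v : Fin D → ℝ} (hv : v ∈ intLattice D) (A : Set (Fin D → ℝ)) :
    latticePts (v +ᵥ A) = latticePts A := by
  have hΛ : v +ᵥ (intLattice D : Set (Fin D → ℝ)) = intLattice D := by
    ext x
    simp only [mem_vadd_set, vadd_eq_add, SetLike.mem_coe]
    refine ⟨fun ⟨y, hy, hyx⟩ => hyx ▸ add_mem hv hy, fun hx => ⟨x - v, sub_mem hx hv, ?_⟩⟩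
    abel
  rw [latticePts_eq_ncard_inter, latticePts_eq_ncard_inter]
  conv_lhs => rw [← hΛ, ← vadd_set_inter, ncard_vadd_set]

lemma finite_inter_intLattice {A : Set (Fin D → ℝ)} (hA : Bornology.IsBounded A) :
    (A ∩ intLattice D).Finite :=
  ZSpan.setFinite_inter _ hA

end IntegerLattice

section Discretization

variable {d : ℕ}

noncomputable def floorVec (r : ℝ) (x : Fin d → ℝ) : Fin d → ℝ := fun i => ⌊r * x i⌋

lemma floorVec_mem_intLattice (r : ℝ) (x : Fin d → ℝ) : floorVec r x ∈ intLattice d :=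
  mem_intLattice.2 fun _ => ⟨_, rfl⟩

lemma measurable_floorVec (r : ℝ) : Measurable (floorVec (d := d) r) :=
  measurable_pi_lambda _ fun i =>
    measurable_from_top.comp (measurable_const.mul (measurable_pi_apply i)).floor

lemma floorVec_preimage_singleton {r : ℝ} (hr : 0 < r) (m : Fin d → ℤ) :
    floorVec r ⁻¹' {fun i => (m i : ℝ)} = univ.pi fun i => Ico (m i / r) ((m i + 1) / r) := by
  ext x
  simp only [mem_preimage, mem_singleton_iff, floorVec, funext_iff, Int.cast_inj,
    Int.floor_eq_iff, Set.mem_pi, mem_univ, true_implies, mem_Ico, div_le_iff₀ hr,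
    lt_div_iff₀ hr, mul_comm r]

lemma volume_floorVec_preimage_singleton {r : ℝ} (hr : 0 < r) {z : Fin d → ℝ}
    (hz : z ∈ intLattice d) : volume (floorVec r ⁻¹' {z}) = ENNReal.ofReal r⁻¹ ^ d := by
  obtain ⟨m, rfl⟩ : z ∈ range fun (m : Fin d → ℤ) i => (m i : ℝ) := by
    rwa [range_intCast_eq_intLattice]
  have hlen : ∀ i, ((m i : ℝ) + 1) / r - m i / r = r⁻¹ := fun i => by field_simp; ring
  simp [floorVec_preimage_singleton hr, volume_pi_pi, Real.volume_Ico, hlen]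

lemma volume_floorVec_preimage {r : ℝ} (hr : 0 < r) {C : Set (Fin d → ℝ)}
    (hC : Bornology.IsBounded C) :
    volume (floorVec r ⁻¹' C) = latticePts C * ENNReal.ofReal r⁻¹ ^ d := by
  have hfin := finite_inter_intLattice hC
  have hpre : floorVec r ⁻¹' C = floorVec r ⁻¹' hfin.toFinset := by
    ext x
    simp [floorVec_mem_intLattice r x]
  rw [hpre, ← sum_measure_preimage_singleton _ fun z _ =>
      measurable_floorVec r (measurableSet_singleton z),
    Finset.sum_congr rfl fun z hz => volume_floorVec_preimage_singleton hr
      (hfin.mem_toFinset.1 hz).2,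
    Finset.sum_const, nsmul_eq_mul, latticePts_eq_ncard_inter, ncard_eq_toFinset_card _ hfin]

lemma dist_inv_smul_floorVec_le {r : ℝ} (hr : 0 < r) (x : Fin d → ℝ) :
    dist x (r⁻¹ • floorVec r x) ≤ r⁻¹ := by
  refine (dist_pi_le_iff (inv_pos.2 hr).le).2 fun i => ?_
  have hfract : x i - r⁻¹ * ⌊r * x i⌋ = r⁻¹ * Int.fract (r * x i) := by
    rw [Int.fract, mul_sub, inv_mul_cancel_left₀ hr.ne']
  rw [Real.dist_eq, Pi.smul_apply, smul_eq_mul, floorVec, hfract,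
    abs_of_nonneg (mul_nonneg (inv_nonneg.2 hr.le) (Int.fract_nonneg _))]
  exact mul_le_of_le_one_right (inv_nonneg.2 hr.le) (Int.fract_lt_one _).le

lemma tendsto_inv_smul_floorVec (x : Fin d → ℝ) :
    Tendsto (fun s : ℕ => (s : ℝ)⁻¹ • floorVec s x) atTop (nhds x) := by
  have hinv : Tendsto (fun s : ℕ => (s : ℝ)⁻¹) atTop (nhds 0) :=
    tendsto_inv_atTop_zero.comp tendsto_natCast_atTop_atTop
  refine tendsto_iff_dist_tendsto_zero.2 (squeeze_zero' (Eventually.of_forall fun _ =>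
    dist_nonneg) ?_ hinv)
  filter_upwards [eventually_gt_atTop 0] with s hs
  rw [dist_comm]
  exact dist_inv_smul_floorVec_le (Nat.cast_pos.2 hs) x

end Discretization

section LatticePointAsymptotics

variable {d : ℕ} {K : Set (Fin d → ℝ)}

lemma eventually_mem_floorVec_preimage_smul_iff (hK : IsClosed K) {x : Fin d → ℝ}
    (hx : x ∉ frontier K) : ∀ᶠ s : ℕ in atTop, x ∈ floorVec s ⁻¹' ((s : ℝ) • K) ↔ x ∈ K := by
  have hmem : ∀ᶠ s : ℕ in atTop,
      x ∈ floorVec s ⁻¹' ((s : ℝ) • K) ↔ (s : ℝ)⁻¹ • floorVec s x ∈ K := by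
    filter_upwards [eventually_gt_atTop 0] with s hs
    exact mem_smul_set_iff_inv_smul_mem₀ (Nat.cast_pos.2 hs).ne' _ _
  rw [frontier, hK.closure_eq, Set.mem_sdiff, not_and_not_right] at hx
  by_cases hxK : x ∈ K
  · filter_upwards [hmem, (tendsto_inv_smul_floorVec x).eventually
      (isOpen_interior.mem_nhds (hx hxK))] with s hs hint
    simp only [hs, hxK, interior_subset hint]
  · filter_upwards [hmem, (tendsto_inv_smul_floorVec x).eventually
      (hK.isOpen_compl.mem_nhds hxK)] with s hs hout
    simp only [hs, hxK, hout]

/-- `floorVec s ⁻¹' (s • K)` is the union of the cells of the grid of mesh `1/s` whose corner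
lies in `K`. -/
lemma tendsto_volume_floorVec_preimage_smul (hK : IsCompact K)
    (hfr : volume (frontier K) = 0) :
    Tendsto (fun s : ℕ => volume (floorVec s ⁻¹' ((s : ℝ) • K))) atTop (nhds (volume K)) := by
  have hsub : ∀ᶠ s : ℕ in atTop, floorVec s ⁻¹' ((s : ℝ) • K) ⊆ Metric.cthickening 1 K := by
    filter_upwards [eventually_ge_atTop 1] with s hs x hx
    have hs' : (0 : ℝ) < s := Nat.cast_pos.2 hs
    refine Metric.mem_cthickening_of_dist_le x _ 1 K
      ((mem_smul_set_iff_inv_smul_mem₀ hs'.ne' _ _).1 hx) ?_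
    exact (dist_inv_smul_floorVec_le hs' x).trans (inv_le_one_of_one_le₀ (Nat.one_le_cast.2 hs))
  have hae : ∀ᵐ x ∂volume, ∀ᶠ s : ℕ in atTop, x ∈ floorVec s ⁻¹' ((s : ℝ) • K) ↔ x ∈ K :=
    measure_mono_null (fun x hx => by_contra fun hfx =>
      hx (eventually_mem_floorVec_preimage_smul_iff hK.isClosed hfx)) hfr
  exact tendsto_measure_of_ae_tendsto_indicator atTop hK.isClosed.measurableSet
    (fun s => measurable_floorVec _ (hK.smul _).isClosed.measurableSet)
    Metric.isClosed_cthickening.measurableSet hK.cthickening.measure_lt_top.ne hsub hae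

lemma tendsto_latticePts_smul_div_pow (hK : IsCompact K) (hfr : volume (frontier K) = 0) :
    Tendsto (fun s : ℕ => (latticePts ((s : ℝ) • K) : ℝ) / (s : ℝ) ^ d) atTop
      (nhds (volume K).toReal) := by
  refine ((ENNReal.tendsto_toReal hK.measure_lt_top.ne).comp
    (tendsto_volume_floorVec_preimage_smul hK hfr)).congr' ?_
  filter_upwards [eventually_gt_atTop 0] with s hs
  have hs' : (0 : ℝ) < s := Nat.cast_pos.2 hs
  rw [Function.comp_apply, volume_floorVec_preimage hs' (hK.smul _).isBounded,
    ENNReal.toReal_mul, ENNReal.toReal_pow, ENNReal.toReal_ofReal (inv_nonneg.2 hs'.le),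
    ENNReal.toReal_natCast, inv_pow, div_eq_mul_inv]

end LatticePointAsymptotics

section RationalSubspace

variable {D : ℕ}

/-- `π` is the coordinate map of a `ℤ`-basis of the lattice `W ∩ ℤ^D` in `W = span ℝ S`,
precomposed with a linear retraction of `ℝ^D` onto `W`. -/
lemma exists_linearMap_latticePts_image_eq {S : Set (Fin D → ℝ)} (hS : S ⊆ intLattice D) :
    ∃ π : (Fin D → ℝ) →ₗ[ℝ] (Fin (Module.finrank ℝ (span ℝ S)) → ℝ),
      ∀ A ⊆ (span ℝ S : Set (Fin D → ℝ)), latticePts (π '' A) = latticePts A := by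
  set W := span ℝ S
  let Λ : Submodule ℤ W := ZLattice.comap ℝ (intLattice D) W.subtype
  have : DiscreteTopology Λ :=
    ZLattice.comap_discreteTopology ℝ _ continuous_subtype_val W.injective_subtype
  have : IsZLattice ℝ Λ :=
    ⟨eq_top_iff.2 (span_span_coe_preimage.ge.trans (span_mono fun _ hw => hS hw))⟩
  let B := (Module.finBasisOfFinrankEq ℤ Λ (ZLattice.rank ℝ Λ)).ofZLatticeBasis ℝ Λ
  have hB : ∀ w : W, B.equivFun w ∈ intLattice _ ↔ (w : Fin D → ℝ) ∈ intLattice D := by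
    intro w
    change _ ↔ w ∈ Λ
    rw [← Module.Basis.ofZLatticeBasis_span ℝ Λ, B.mem_span_iff_repr_mem ℤ,
      (Pi.basisFun ℝ _).mem_span_iff_repr_mem ℤ]
    rfl
  obtain ⟨g, hg⟩ := W.subtype.exists_leftInverse_of_injective W.ker_subtype
  have hπ : ∀ x (hx : x ∈ W), (B.equivFun.toLinearMap ∘ₗ g) x = B.equivFun ⟨x, hx⟩ :=
    fun x hx => congrArg B.equivFun (LinearMap.congr_fun hg ⟨x, hx⟩)
  refine ⟨B.equivFun.toLinearMap ∘ₗ g, fun A hA => ?_⟩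
  have hinj : InjOn (B.equivFun.toLinearMap ∘ₗ g) A := fun x hx y hy hxy => by
    rw [hπ x (hA hx), hπ y (hA hy)] at hxy
    exact congrArg Subtype.val (B.equivFun.injective hxy)
  have himage : (B.equivFun.toLinearMap ∘ₗ g) '' A ∩ intLattice (Module.finrank ℝ W) =
      (B.equivFun.toLinearMap ∘ₗ g) '' (A ∩ intLattice D) := by
    ext y
    constructor
    · rintro ⟨⟨x, hxA, rfl⟩, hy⟩
      exact ⟨x, ⟨hxA, (hB _).1 (hπ x (hA hxA) ▸ hy)⟩, rfl⟩
    · rintro ⟨x, ⟨hxA, hx⟩, rfl⟩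
      exact ⟨⟨x, hxA, rfl⟩, hπ x (hA hxA) ▸ (hB ⟨x, hA hxA⟩).2 hx⟩
  rw [latticePts_eq_ncard_inter, latticePts_eq_ncard_inter, himage,
    (hinj.mono inter_subset_left).ncard_image]

end RationalSubspace

section Faces

variable {D : ℕ} {F P : Set (Fin D → ℝ)}

lemma IsFaceOf.isExposed (h : IsFaceOf F P) : IsExposed ℝ P F := fun _ => by
  obtain ⟨-, c, rfl⟩ := h
  exact ⟨∑ i, c i • ContinuousLinearMap.proj i, by simp⟩

lemma IsFaceOf.subset (h : IsFaceOf F P) : F ⊆ P :=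
  h.isExposed.subset

lemma IsIntegralPolytope.isPolytope (hP : IsIntegralPolytope P) : IsPolytope P :=
  let ⟨V, hV, _, hPV⟩ := hP
  ⟨V, hV, hPV⟩

/-- By Krein–Milman, a face is the hull of its extreme points, which are vertices of `P`. -/
lemma IsFaceOf.eq_convexHull_inter {V : Finset (Fin D → ℝ)}
    (hPV : P = convexHull ℝ (V : Set (Fin D → ℝ))) (h : IsFaceOf F P) :
    F = convexHull ℝ ((V : Set (Fin D → ℝ)) ∩ F) := by
  have hexp := h.isExposed
  have hFc : IsCompact F := hexp.isCompact (hPV ▸ V.finite_toSet.isCompact_convexHull (𝕜 := ℝ))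
  have hFconv : Convex ℝ F := hexp.convex (hPV ▸ convex_convexHull ℝ _)
  refine subset_antisymm ?_ (convexHull_min inter_subset_right hFconv)
  conv_lhs => rw [← closure_convexHull_extremePoints hFc hFconv]
  refine closure_minimal (convexHull_mono fun x hx => ⟨?_, hx.1⟩)
    ((V.finite_toSet.inter_of_left F).isCompact_convexHull (𝕜 := ℝ)).isClosed
  exact extremePoints_convexHull_subset (hPV ▸ hexp.isExtreme.extremePoints_subset_extremePoints hx)

lemma IsFaceOf.isIntegralPolytope (hP : IsIntegralPolytope P) (h : IsFaceOf F P) :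
    IsIntegralPolytope F := by
  classical
  obtain ⟨V, -, hV, hPV⟩ := hP
  have hFV := h.eq_convexHull_inter hPV
  refine ⟨V.filter (· ∈ F), ?_, fun x hx => hV x (Finset.mem_filter.1 hx).1, ?_⟩
  · rw [← Finset.coe_nonempty, Finset.coe_filter]
    exact convexHull_nonempty_iff.1 (hFV ▸ h.1)
  · rwa [Finset.coe_filter]

lemma finite_setOf_isFaceOf (hP : IsPolytope P) : {F | IsFaceOf F P}.Finite := by
  obtain ⟨V, -, hPV⟩ := hP
  refine Finite.of_finite_image (f := ((V : Set (Fin D → ℝ)) ∩ ·))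
    (V.finite_toSet.finite_subsets.subset ?_) fun F hF G hG hFG => ?_
  · rintro _ ⟨F, -, rfl⟩
    exact inter_subset_left
  · rw [IsFaceOf.eq_convexHull_inter hPV hF, IsFaceOf.eq_convexHull_inter hPV hG]
    exact congrArg _ hFG

lemma IsFaceOf.smul (h : IsFaceOf F P) {r : ℝ} (hr : 0 < r) : IsFaceOf (r • F) (r • P) := by
  obtain ⟨hne, c, rfl⟩ := h
  have hsum : ∀ x : Fin D → ℝ, ∑ i, c i * (r • x) i = r * ∑ i, c i * x i := fun x => by
    simp only [Pi.smul_apply, smul_eq_mul, Finset.mul_sum]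
    exact Finset.sum_congr rfl fun i _ => by ring
  refine ⟨hne.smul_set, c, subset_antisymm ?_ ?_⟩
  · rintro _ ⟨x, ⟨hxP, hxmax⟩, rfl⟩
    refine ⟨⟨x, hxP, rfl⟩, ?_⟩
    rintro _ ⟨y, hyP, rfl⟩
    rw [hsum, hsum]
    exact mul_le_mul_of_nonneg_left (hxmax y hyP) hr.le
  · rintro _ ⟨⟨x, hxP, rfl⟩, hmax⟩
    refine ⟨x, ⟨hxP, fun y hy => ?_⟩, rfl⟩
    have := hmax (r • y) ⟨y, hy, rfl⟩
    rwa [hsum, hsum, mul_le_mul_iff_right₀ hr] at this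

lemma setOf_isFaceOf_smul {r : ℝ} (hr : 0 < r) :
    {G | IsFaceOf G (r • P)} = (r • ·) '' {F | IsFaceOf F P} := by
  refine subset_antisymm (fun G hG => ⟨r⁻¹ • G, ?_, smul_inv_smul₀ hr.ne' G⟩) ?_
  · rintro _ ⟨F, hF, rfl⟩
    exact hF.smul hr
  · simpa [inv_smul_smul₀ hr.ne'] using IsFaceOf.smul hG (inv_pos.2 hr)

lemma IsIntegralPolytope.natCast_smul (hP : IsIntegralPolytope P) (t : ℕ) :
    IsIntegralPolytope ((t : ℝ) • P) := by
  classical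
  obtain ⟨V, hVne, hV, rfl⟩ := hP
  refine ⟨V.image ((t : ℝ) • ·), hVne.image _, ?_, ?_⟩
  · simp only [Finset.mem_image, forall_exists_index, and_imp, forall_apply_eq_imp_iff₂]
    intro v hv i
    obtain ⟨z, hz⟩ := hV v hv i
    exact ⟨t * z, by simp [hz]⟩
  · rw [Finset.coe_image, image_smul, convexHull_smul]

end Faces

section NormalizedVolume

variable {D : ℕ} {F P : Set (Fin D → ℝ)}

lemma polyDim_smul (F : Set (Fin D → ℝ)) {r : ℝ} (hr : r ≠ 0) : polyDim (r • F) = polyDim F := by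
  let e := LinearEquiv.smulOfNeZero ℝ (Fin D → ℝ) r hr
  rw [polyDim, polyDim, ← e.finrank_map_eq (vectorSpan ℝ F), ← image_smul]
  exact congrArg (fun W : Submodule ℝ (Fin D → ℝ) => Module.finrank ℝ W)
    (AffineMap.map_vectorSpan e.toLinearMap.toAffineMap).symm

lemma polyDim_mono (h : F ⊆ P) : polyDim F ≤ polyDim P :=
  Submodule.finrank_mono (vectorSpan_mono ℝ h)

lemma smul_vadd_set_eq {E : Type*} [AddCommGroup E] [Module ℝ E] (r : ℝ) (v : E) (A : Set E) :
    r • (v +ᵥ A) = (r • v) +ᵥ r • A := by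
  simp only [← image_smul, ← image_vadd, image_image, vadd_eq_add, smul_add]

/-- Translating a vertex `v₀` of `F` to the origin puts `F` inside the rational subspace
`vectorSpan ℝ F`, whose lattice coordinates turn `F` into a full-dimensional convex body. -/
lemma IsIntegralPolytope.exists_tendsto_latticePts_smul_div_pow (hF : IsIntegralPolytope F) :
    ∃ L, Tendsto (fun s : ℕ => (latticePts ((s : ℝ) • F) : ℝ) / (s : ℝ) ^ polyDim F) atTop
      (nhds L) := by
  obtain ⟨V, ⟨v₀, hv₀⟩, hV, rfl⟩ := hF
  have hv₀Λ : v₀ ∈ intLattice D := mem_intLattice.2 (hV v₀ hv₀)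
  have hspan : vectorSpan ℝ (convexHull ℝ (V : Set (Fin D → ℝ))) =
      span ℝ ((· - v₀) '' (V : Set (Fin D → ℝ))) := by
    rw [← direction_affineSpan, affineSpan_convexHull, direction_affineSpan,
      vectorSpan_eq_span_vsub_set_right ℝ (Finset.mem_coe.2 hv₀)]
    rfl
  obtain ⟨π, hπ⟩ := exists_linearMap_latticePts_image_eq (S := (· - v₀) '' (V : Set _))
    (by rintro _ ⟨v, hv, rfl⟩; exact sub_mem (mem_intLattice.2 (hV v hv)) hv₀Λ)
  set G := -v₀ +ᵥ convexHull ℝ (V : Set (Fin D → ℝ))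
  have hG : ∀ s : ℝ, s • G ⊆ span ℝ ((· - v₀) '' (V : Set (Fin D → ℝ))) := by
    rintro s _ ⟨_, ⟨x, hx, rfl⟩, rfl⟩
    refine Submodule.smul_mem _ s (hspan ▸ ?_)
    change -v₀ + x ∈ _
    rw [neg_add_eq_sub]
    exact vsub_mem_vectorSpan ℝ hx (subset_convexHull ℝ _ hv₀)
  have hK : IsCompact (π '' G) :=
    ((V.finite_toSet.isCompact_convexHull (𝕜 := ℝ)).vadd (-v₀)).image
      (LinearMap.continuous_of_finiteDimensional π)
  have hKconv : Convex ℝ (π '' G) := ((convex_convexHull ℝ _).vadd _).linear_image π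
  refine ⟨_, (tendsto_latticePts_smul_div_pow hK (hKconv.addHaar_frontier volume)).congr
    fun s => ?_⟩
  have hsv₀ : (s : ℝ) • v₀ ∈ intLattice D := by
    rw [Nat.cast_smul_eq_nsmul]
    exact nsmul_mem hv₀Λ s
  rw [polyDim, hspan, ← image_smul_set, hπ _ (hG s), smul_vadd_set_eq, smul_neg,
    latticePts_vadd (neg_mem hsv₀)]

lemma IsIntegralPolytope.tendsto_nvol (hF : IsIntegralPolytope F) :
    Tendsto (fun s : ℕ => (latticePts ((s : ℝ) • F) : ℝ) / (s : ℝ) ^ polyDim F) atTop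
      (nhds (nvol F)) := by
  obtain ⟨_, h⟩ := hF.exists_tendsto_latticePts_smul_div_pow
  rwa [nvol, h.limUnder_eq]

/-- Along the subsequence `s * t` the limit defining `nvol F` computes `nvol (t • F)`. -/
lemma IsIntegralPolytope.nvol_natCast_smul (hF : IsIntegralPolytope F) {t : ℕ} (ht : 0 < t) :
    nvol ((t : ℝ) • F) = (t : ℝ) ^ polyDim F * nvol F := by
  have ht' : (t : ℝ) ≠ 0 := Nat.cast_ne_zero.2 ht.ne'
  rw [nvol, polyDim_smul F ht']
  refine Tendsto.limUnder_eq (((hF.tendsto_nvol.comp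
    (tendsto_id.atTop_mul_one_le fun _ => ht)).const_mul ((t : ℝ) ^ polyDim F)).congr' ?_)
  filter_upwards [eventually_gt_atTop 0] with s hs
  have hs' : (s : ℝ) ≠ 0 := Nat.cast_ne_zero.2 hs.ne'
  rw [Function.comp_apply, id, Nat.cast_mul, smul_smul, mul_pow]
  field_simp

end NormalizedVolume

lemma finsum_mem_mul_pow_eq_sum_range {α R : Type*} [CommSemiring R] {p : α → Prop}
    (hfin : {x | p x}.Finite) (g : α → ℕ) {N : ℕ} (hg : ∀ x, p x → g x ≤ N) (f : α → R) (t : R) :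
    ∑ᶠ x ∈ {x | p x}, f x * t ^ g x =
      ∑ k ∈ Finset.range (N + 1), (∑ᶠ x ∈ {x | p x ∧ g x = k}, f x) * t ^ k := by
  classical
  rw [finsum_mem_eq_finite_toFinset_sum _ hfin, ← Finset.sum_fiberwise_of_maps_to
    (t := Finset.range (N + 1)) (g := g) fun x hx =>
      Finset.mem_range.2 (Nat.lt_succ_of_le (hg x (hfin.mem_toFinset.1 hx)))]
  refine Finset.sum_congr rfl fun k _ => ?_
  have hfiber : {x | p x ∧ g x = k} = ↑(hfin.toFinset.filter (g · = k)) := by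
    ext x
    simp
  rw [hfiber, finsum_mem_coe_finset, Finset.sum_mul]
  exact Finset.sum_congr rfl fun x hx => by rw [(Finset.mem_filter.1 hx).2]

/-- If `α` satisfies McMullen's formula and is invariant under dilation
(`α(tF,tP) = α(F,P)` for positive integers `t`), then for every nonempty integral
polytope `P` and `t ≥ 1`, `Lat(tP) = Σ_{k=0}^{dim P} c_k t^k` with
`c_k = Σ_{F a k-dimensional face of P} α(F,P)·nvol(F)`. -/
theorem mcmullen_ehrhart_expansion {D : ℕ}
    (α : Set (Fin D → ℝ) → Set (Fin D → ℝ) → ℝ)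
    (hMc : ∀ Q : Set (Fin D → ℝ), IsIntegralPolytope Q →
      (latticePts Q : ℝ) = ∑ᶠ F ∈ {F | IsFaceOf F Q}, α F Q * nvol F)
    (hdil : ∀ t : ℕ, 0 < t → ∀ P F : Set (Fin D → ℝ),
      IsIntegralPolytope P → IsFaceOf F P → α ((t : ℝ) • F) ((t : ℝ) • P) = α F P)
    (P : Set (Fin D → ℝ)) (hP : IsIntegralPolytope P) :
    ∀ t : ℕ, 1 ≤ t →
      (latticePts ((t : ℝ) • P) : ℝ) =
        ∑ k ∈ Finset.range (polyDim P + 1),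
          (∑ᶠ F ∈ {F | IsFaceOf F P ∧ polyDim F = k}, α F P * nvol F) * (t : ℝ) ^ k := by
  intro t ht
  have ht' : (0 : ℝ) < t := Nat.cast_pos.2 ht
  have hterm : ∀ F ∈ {F | IsFaceOf F P}, α ((t : ℝ) • F) ((t : ℝ) • P) * nvol ((t : ℝ) • F) =
      α F P * nvol F * (t : ℝ) ^ polyDim F := fun F hF => by
    rw [hdil t ht P F hP hF, (hF.isIntegralPolytope hP).nvol_natCast_smul ht]
    ring
  rw [hMc _ (hP.natCast_smul t), setOf_isFaceOf_smul ht',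
    finsum_mem_image (MulAction.injective₀ ht'.ne').injOn, finsum_mem_congr rfl hterm]
  exact finsum_mem_mul_pow_eq_sum_range (finite_setOf_isFaceOf hP.isPolytope) polyDim
    (fun F hF => polyDim_mono hF.subset) _ _
end
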